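/- arXiv:1706.03025 — 6 statements merged into one kernel-verified Lean document; each statement's English description precedes it below -/
import Mathlib

section
/- If S₁ is a strongly (n,Q)-spanning set and S₂ is a strongly (k,Q)-spanning set, then the set S of concatenations ω = (ω₁ restricted to times 0..n−1 followed by ω₂), for ω₁ ∈ S₁ and ω₂ ∈ S₂, is strongly (n+k,Q)-spanning. -/
open Filter Topology
open scoped ENNReal

noncomputable section

/-- Solution map of the discrete-time control system `x_{k+1} = F(x_k, u_k)`. -/
def phi {X U : Type*} (F : X → U → X) : ℕ → X → (ℕ → U) → X
  | 0, x, _ => x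
  | k + 1, x, ω => F (phi F k x ω) (ω k)

/-- Birkhoff-type sum of `f` along the first `n` control values. -/
def Snf {U : Type*} (f : U → ℝ) (n : ℕ) (ω : ℕ → U) : ℝ :=
  ∑ i ∈ Finset.range n, f (ω i)

/-- `S` is a strongly `(n,Q)`-spanning set of control sequences. -/
def IsSpanningSet {X U : Type*} [TopologicalSpace X] (F : X → U → X) (Q : Set X) (n : ℕ)
    (S : Set (ℕ → U)) : Prop :=
  ∀ x ∈ Q, ∃ ω ∈ S, ∀ i, 1 ≤ i → i ≤ n → phi F i x ω ∈ interior Q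

/-- `Q` is strongly invariant: every point of `Q` can be steered into the interior of `Q`. -/
def StronglyInvariant {X U : Type*} [TopologicalSpace X] (F : X → U → X) (Q : Set X) : Prop :=
  ∀ x ∈ Q, ∃ u, F x u ∈ interior Q

/-- `a_n(f,Q)`: infimum over strongly `(n,Q)`-spanning (finite) sets `S` of
`∑_{ω ∈ S} exp ((S_n f)(ω))`. -/
def aInv {X U : Type*} [TopologicalSpace X] (F : X → U → X) (f : U → ℝ) (Q : Set X) (n : ℕ) :
    ℝ≥0∞ :=
  ⨅ (S : Finset (ℕ → U)) (_ : IsSpanningSet F Q n ↑S),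
    ∑ ω ∈ S, ENNReal.ofReal (Real.exp (Snf f n ω))

/-- The inner invariance pressure `P_int(f,Q) = lim (1/n) log a_n(f,Q)` (as a limsup, with
values in the extended reals). -/
def Pinv {X U : Type*} [TopologicalSpace X] (F : X → U → X) (f : U → ℝ) (Q : Set X) : EReal :=
  Filter.atTop.limsup fun n : ℕ => (((n : ℝ)⁻¹ : ℝ) : EReal) * ENNReal.log (aInv F f Q n)


lemma phi_congr {X U : Type*} (F : X → U → X) (m : ℕ) (x : X) (ω ω' : ℕ → U)
    (h : ∀ i < m, ω i = ω' i) : phi F m x ω = phi F m x ω' := by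
  induction m with
  | zero => rfl
  | succ m ih =>
    simp only [phi, ih (fun i hi => h i (Nat.lt_succ_of_lt hi)), h m (Nat.lt_succ_self m)]

lemma phi_add {X U : Type*} (F : X → U → X) (n j : ℕ) (x : X) (ω : ℕ → U) :
    phi F (n + j) x ω = phi F j (phi F n x ω) (fun i => ω (n + i)) := by
  induction j with
  | zero => rfl
  | succ j ih => show F (phi F (n + j) x ω) (ω (n + j)) = _; rw [ih]; rfl

/-- Concatenations of a strongly `(n,Q)`-spanning set with a strongly `(k,Q)`-spanning
set form a strongly `(n+k,Q)`-spanning set. -/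
theorem concat_spanning {X U : Type*} [MetricSpace X] (F : X → U → X) (Q : Set X)
    (hQ : IsCompact Q) (n k : ℕ) (S₁ S₂ : Set (ℕ → U))
    (h₁ : IsSpanningSet F Q n S₁) (h₂ : IsSpanningSet F Q k S₂) :
    IsSpanningSet F Q (n + k)
      {ω | ∃ ω₁ ∈ S₁, ∃ ω₂ ∈ S₂,
        ω = fun i : ℕ => if i < n then ω₁ i else ω₂ (i - n)} := by
  intro x hx
  obtain ⟨ω₁, hω₁, hφ₁⟩ := h₁ x hx
  set y := phi F n x ω₁ with hy
  have hyQ : y ∈ Q := by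
    rcases Nat.eq_zero_or_pos n with h0 | h0
    · simpa [hy, h0, phi] using hx
    · exact interior_subset (hφ₁ n h0 le_rfl)
  obtain ⟨ω₂, hω₂, hφ₂⟩ := h₂ y hyQ
  refine ⟨fun i : ℕ => if i < n then ω₁ i else ω₂ (i - n),
    ⟨ω₁, hω₁, ω₂, hω₂, rfl⟩, ?_⟩
  intro i hi1 hink
  set ω := fun i : ℕ => if i < n then ω₁ i else ω₂ (i - n) with hω
  by_cases hin : i ≤ n
  · have : phi F i x ω = phi F i x ω₁ := by
      apply phi_congr
      intro j hj
      simp [hω, lt_of_lt_of_le hj hin]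
    rw [this]
    exact hφ₁ i hi1 hin
  · push_neg at hin
    obtain ⟨j, rfl⟩ := Nat.exists_eq_add_of_le hin.le
    have hj1 : 1 ≤ j := by omega
    have hjk : j ≤ k := by omega
    have h1 : phi F (n + j) x ω = phi F j (phi F n x ω) (fun i => ω (n + i)) :=
      phi_add F n j x ω
    have h2 : phi F n x ω = y := by
      rw [hy]; apply phi_congr; intro i hi; simp [hω, hi]
    have h3 : phi F j y (fun i => ω (n + i)) = phi F j y ω₂ := by
      apply phi_congr; intro i _; simp [hω]
    rw [h1, h2, h3]
    exact hφ₂ j hj1 hjk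
end
end

section
/- If f : U → ℝ is bounded below and F(Q,U) ⊆ int Q, then the inner invariance pressure satisfies P_int(f,Q) = inf_{u∈U} f(u). -/
open Filter Topology
open scoped ENNReal

noncomputable section

/-! Every constant control keeps `Q` inside its interior, so the singleton `{u, u, …}` is
strongly `(n,Q)`-spanning and `a_n(f,Q) ≤ e^{n f(u)}`. Conversely any spanning set contains at
least one sequence, whose Birkhoff sum is at least `n · inf f`, so `a_n(f,Q) ≥ e^{n · inf f}`.
Taking `(1/n) log` squeezes the pressure between `inf f` and every `f(u)`. -/

section

variable {X U : Type*} [TopologicalSpace X] {F : X → U → X} {Q : Set X} {u : U}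

lemma phi_const_succ_mem_interior (hu : ∀ x ∈ Q, F x u ∈ interior Q) {x : X} (hx : x ∈ Q)
    (j : ℕ) : phi F (j + 1) x (fun _ => u) ∈ interior Q := by
  induction j with
  | zero => exact hu x hx
  | succ k ih => exact hu _ (interior_subset ih)

lemma isSpanningSet_const (hu : ∀ x ∈ Q, F x u ∈ interior Q) (n : ℕ) :
    IsSpanningSet F Q n {fun _ => u} := by
  intro x hx
  refine ⟨fun _ => u, rfl, fun i hi _ => ?_⟩
  obtain ⟨j, rfl⟩ := Nat.exists_eq_add_of_le' hi
  exact phi_const_succ_mem_interior hu hx j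

lemma Snf_const (f : U → ℝ) (n : ℕ) (u : U) : Snf f n (fun _ => u) = n * f u := by
  simp [Snf]

lemma mul_le_Snf {f : U → ℝ} {m : ℝ} (hm : ∀ u, m ≤ f u) (n : ℕ) (ω : ℕ → U) :
    n * m ≤ Snf f n ω := by
  simpa [Snf] using Finset.card_nsmul_le_sum (Finset.range n) (fun i => f (ω i)) m
    (fun i _ => hm (ω i))

lemma aInv_le_of_maps_into_interior (f : U → ℝ) (hu : ∀ x ∈ Q, F x u ∈ interior Q) (n : ℕ) :
    aInv F f Q n ≤ ENNReal.ofReal (Real.exp (n * f u)) :=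
  calc aInv F f Q n ≤ ∑ ω ∈ {fun _ => u}, ENNReal.ofReal (Real.exp (Snf f n ω)) :=
        iInf₂_le {fun _ => u} (by simpa using isSpanningSet_const hu n)
    _ = ENNReal.ofReal (Real.exp (n * f u)) := by rw [Finset.sum_singleton, Snf_const]

variable (F) in
lemma le_aInv_of_forall_le {f : U → ℝ} (hQ : Q.Nonempty) {m : ℝ} (hm : ∀ u, m ≤ f u) (n : ℕ) :
    ENNReal.ofReal (Real.exp (n * m)) ≤ aInv F f Q n := by
  refine le_iInf₂ fun S hS => ?_
  obtain ⟨x, hx⟩ := hQ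
  obtain ⟨ω, hωS, -⟩ := hS x hx
  calc ENNReal.ofReal (Real.exp (n * m)) ≤ ENNReal.ofReal (Real.exp (Snf f n ω)) := by
        gcongr; exact mul_le_Snf hm n ω
    _ ≤ ∑ ω ∈ S, ENNReal.ofReal (Real.exp (Snf f n ω)) :=
        Finset.single_le_sum (f := fun ω => ENNReal.ofReal (Real.exp (Snf f n ω)))
          (fun _ _ => zero_le) (Finset.mem_coe.mp hωS)

end

lemma inv_mul_log_le_of_le_ofReal_exp {A : ℝ≥0∞} {n b : ℝ} (hn : 0 < n)
    (h : A ≤ ENNReal.ofReal (Real.exp (n * b))) :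
    ((n⁻¹ : ℝ) : EReal) * ENNReal.log A ≤ b := by
  have hlog := ENNReal.log_le_log h
  rw [ENNReal.log_ofReal_of_pos (Real.exp_pos _), Real.log_exp] at hlog
  calc ((n⁻¹ : ℝ) : EReal) * ENNReal.log A ≤ ((n⁻¹ : ℝ) : EReal) * ((n * b : ℝ) : EReal) :=
        mul_le_mul_of_nonneg_left hlog (by exact_mod_cast (inv_pos.2 hn).le)
    _ = b := by rw [← EReal.coe_mul, inv_mul_cancel_left₀ hn.ne']

lemma le_inv_mul_log_of_ofReal_exp_le {A : ℝ≥0∞} {n a : ℝ} (hn : 0 < n)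
    (h : ENNReal.ofReal (Real.exp (n * a)) ≤ A) :
    (a : EReal) ≤ ((n⁻¹ : ℝ) : EReal) * ENNReal.log A := by
  have hlog := ENNReal.log_le_log h
  rw [ENNReal.log_ofReal_of_pos (Real.exp_pos _), Real.log_exp] at hlog
  calc (a : EReal) = ((n⁻¹ : ℝ) : EReal) * ((n * a : ℝ) : EReal) := by
        rw [← EReal.coe_mul, inv_mul_cancel_left₀ hn.ne']
    _ ≤ ((n⁻¹ : ℝ) : EReal) * ENNReal.log A :=
        mul_le_mul_of_nonneg_left hlog (by exact_mod_cast (inv_pos.2 hn).le)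

section

variable {X U : Type*} [TopologicalSpace X] {F : X → U → X} {Q : Set X}

lemma Pinv_le_of_maps_into_interior (f : U → ℝ) {u : U} (hu : ∀ x ∈ Q, F x u ∈ interior Q) :
    Pinv F f Q ≤ f u := by
  refine limsup_le_of_le (by isBoundedDefault) ?_
  filter_upwards [eventually_gt_atTop 0] with n hn
  exact inv_mul_log_le_of_le_ofReal_exp (Nat.cast_pos.2 hn)
    (aInv_le_of_maps_into_interior f hu n)

variable (F) in
lemma le_Pinv_of_forall_le {f : U → ℝ} (hQ : Q.Nonempty) {m : ℝ} (hm : ∀ u, m ≤ f u) :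
    (m : EReal) ≤ Pinv F f Q := by
  refine le_limsup_of_frequently_le' (Eventually.frequently ?_)
  filter_upwards [eventually_gt_atTop 0] with n hn
  exact le_inv_mul_log_of_ofReal_exp_le (Nat.cast_pos.2 hn) (le_aInv_of_forall_le F hQ hm n)

end

theorem pressure_eq_inf_of_maps_into_interior_general {X U : Type*} [MetricSpace X] [Nonempty U]
    (F : X → U → X)
    (Q : Set X) (hQne : Q.Nonempty)
    (f : U → ℝ) (hf : BddBelow (Set.range f))
    (hFQ : ∀ x ∈ Q, ∀ u : U, F x u ∈ interior Q) :
    Pinv F f Q = ⨅ u : U, ((f u : ℝ) : EReal) := by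
  have hcoe : ((⨅ u, f u : ℝ) : EReal) = ⨅ u : U, ((f u : ℝ) : EReal) :=
    Monotone.map_ciInf_of_continuousAt continuous_coe_real_ereal.continuousAt
      (fun _ _ h => EReal.coe_le_coe_iff.2 h) hf
  refine le_antisymm (le_iInf fun u => Pinv_le_of_maps_into_interior f (hFQ · · u)) ?_
  exact hcoe ▸ le_Pinv_of_forall_le F hQne (ciInf_le hf)

/-- If `f` is bounded below and `F(Q,U) ⊆ int Q`, then `P_int(f,Q) = inf_{u ∈ U} f(u)`. -/
theorem pressure_eq_inf_of_maps_into_interior {X U : Type*} [MetricSpace X] [Nonempty U]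
    (F : X → U → X) (hF : ∀ u, Continuous fun x => F x u)
    (Q : Set X) (hQ : IsCompact Q) (hQne : Q.Nonempty)
    (f : U → ℝ) (hf : BddBelow (Set.range f))
    (hFQ : ∀ x ∈ Q, ∀ u : U, F x u ∈ interior Q) :
    Pinv F f Q = ⨅ u : U, ((f u : ℝ) : EReal) :=
  pressure_eq_inf_of_maps_into_interior_general F Q hQne f hf hFQ
end
end

section
/- If U is compact, then the inner invariance pressure is Lipschitz in the potential: |P_int(f,Q) − P_int(g,Q)| ≤ ‖f − g‖_∞ for all continuous f, g on U. -/
open Filter Topology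
open scoped ENNReal

noncomputable section

/-- Scaling an EReal inequality by a positive real. -/
lemma ereal_scale {r : ℝ} (hr : 0 < r) {x y : EReal} {d : ℝ} (h : x ≤ y + (d : EReal)) :
    (r : EReal) * x ≤ (r : EReal) * y + ((r * d : ℝ) : EReal) := by
  induction y with
  | bot =>
    rw [EReal.bot_add] at h
    rw [le_bot_iff.mp h, EReal.coe_mul_bot_of_pos hr]
    exact bot_le
  | coe s =>
    have h' : x ≤ ((s + d : ℝ) : EReal) := by rwa [EReal.coe_add]
    calc (r : EReal) * x ≤ (r : EReal) * ((s + d : ℝ) : EReal) :=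
          mul_le_mul_of_nonneg_left h' (by exact_mod_cast hr.le)
      _ = ((r * (s + d) : ℝ) : EReal) := by rw [EReal.coe_mul]
      _ = (r : EReal) * (s : EReal) + ((r * d : ℝ) : EReal) := by
          rw [mul_add, EReal.coe_add, EReal.coe_mul]
  | top =>
    rw [EReal.coe_mul_top_of_pos hr, EReal.top_add_coe]
    exact le_top

lemma aInv_le_aInv {X U : Type*} [TopologicalSpace X] (F : X → U → X) (Q : Set X)
    (f g : U → ℝ) (c : ℝ) (hle : ∀ u, f u - g u ≤ c) (n : ℕ) :
    aInv F f Q n ≤ aInv F g Q n * ENNReal.ofReal (Real.exp ((n : ℝ) * c)) := by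
  set e : ℝ≥0∞ := ENNReal.ofReal (Real.exp ((n : ℝ) * c)) with he
  have he0 : e ≠ 0 := by
    simp [he, ENNReal.ofReal_eq_zero, not_le, Real.exp_pos]
  have heT : e ≠ ∞ := ENNReal.ofReal_ne_top
  rw [aInv, aInv, ENNReal.iInf_mul_of_ne he0 heT]
  refine le_iInf fun S => ?_
  rw [ENNReal.iInf_mul_of_ne he0 heT]
  refine le_iInf fun hS => ?_
  refine iInf₂_le_of_le S hS ?_
  rw [Finset.sum_mul]
  refine Finset.sum_le_sum fun ω _ => ?_
  rw [he, ← ENNReal.ofReal_mul (Real.exp_nonneg _), ← Real.exp_add]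
  refine ENNReal.ofReal_le_ofReal (Real.exp_le_exp.mpr ?_)
  have hsum : ∀ i ∈ Finset.range n, f (ω i) ≤ g (ω i) + c :=
    fun i _ => by linarith [hle (ω i)]
  calc Snf f n ω ≤ ∑ i ∈ Finset.range n, (g (ω i) + c) := Finset.sum_le_sum hsum
    _ = Snf g n ω + (n : ℝ) * c := by
        rw [Finset.sum_add_distrib, Finset.sum_const, Finset.card_range, nsmul_eq_mul, Snf]

lemma Pinv_le_Pinv {X U : Type*} [TopologicalSpace X] (F : X → U → X) (Q : Set X)
    (f g : U → ℝ) (c : ℝ) (hle : ∀ u, f u - g u ≤ c) :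
    Pinv F f Q ≤ Pinv F g Q + (c : EReal) := by
  have hterm : ∀ n : ℕ, 1 ≤ n →
      (((n : ℝ)⁻¹ : ℝ) : EReal) * ENNReal.log (aInv F f Q n)
        ≤ (((n : ℝ)⁻¹ : ℝ) : EReal) * ENNReal.log (aInv F g Q n) + (c : EReal) := by
    intro n hn
    have hn0 : (0 : ℝ) < (n : ℝ) := by exact_mod_cast hn
    have hnpos : (0 : ℝ) < (n : ℝ)⁻¹ := inv_pos.mpr hn0
    have hlog : ENNReal.log (aInv F f Q n)
        ≤ ENNReal.log (aInv F g Q n) + (((n : ℝ) * c : ℝ) : EReal) := by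
      calc ENNReal.log (aInv F f Q n)
          ≤ ENNReal.log (aInv F g Q n * ENNReal.ofReal (Real.exp ((n : ℝ) * c))) :=
            ENNReal.log_monotone (aInv_le_aInv F Q f g c hle n)
        _ = ENNReal.log (aInv F g Q n) + (((n : ℝ) * c : ℝ) : EReal) := by
            rw [ENNReal.log_mul_add, ENNReal.log_ofReal_of_pos (Real.exp_pos _), Real.log_exp]
    have h := ereal_scale hnpos hlog
    have hc : (n : ℝ)⁻¹ * ((n : ℝ) * c) = c := by field_simp
    rwa [hc] at h
  set v : ℕ → EReal := fun n : ℕ => (((n : ℝ)⁻¹ : ℝ) : EReal) * ENNReal.log (aInv F g Q n)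
    with hv
  set w : ℕ → EReal := fun _ : ℕ => (c : EReal) with hw
  have hev : ∀ᶠ n : ℕ in atTop,
      (((n : ℝ)⁻¹ : ℝ) : EReal) * ENNReal.log (aInv F f Q n) ≤ (v + w) n := by
    filter_upwards [eventually_ge_atTop 1] with n hn
    simpa [hv, hw, Pi.add_apply] using hterm n hn
  calc Pinv F f Q
      ≤ atTop.limsup (v + w) := limsup_le_limsup hev
    _ ≤ atTop.limsup v + atTop.limsup w := by
        refine EReal.limsup_add_le ?_ ?_
        · right; rw [hw, limsup_const]; exact EReal.coe_ne_top c
        · right; rw [hw, limsup_const]; exact EReal.coe_ne_bot c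
    _ = Pinv F g Q + (c : EReal) := by rw [hw, limsup_const]; rfl

/-- If `U` is compact, the inner invariance pressure is Lipschitz in the potential:
`|P_int(f,Q) − P_int(g,Q)| ≤ ‖f − g‖_∞`. -/
theorem pressure_lipschitz {X U : Type*} [MetricSpace X] [TopologicalSpace U] [CompactSpace U]
    (F : X → U → X) (hF : ∀ u, Continuous fun x => F x u)
    (Q : Set X) (hQ : IsCompact Q) (hinv : StronglyInvariant F Q)
    (f g : U → ℝ) (hf : Continuous f) (hg : Continuous g) :
    Pinv F f Q ≤ Pinv F g Q + ((⨆ u : U, |f u - g u| : ℝ) : EReal) ∧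
    Pinv F g Q ≤ Pinv F f Q + ((⨆ u : U, |f u - g u| : ℝ) : EReal) := by
  have hbdd : BddAbove (Set.range fun u : U => |f u - g u|) :=
    (isCompact_range ((hf.sub hg).abs)).bddAbove
  have hle1 : ∀ u, f u - g u ≤ ⨆ u : U, |f u - g u| :=
    fun u => (le_abs_self _).trans (le_ciSup hbdd u)
  have hle2 : ∀ u, g u - f u ≤ ⨆ u : U, |f u - g u| := fun u =>
    (le_abs_self _).trans (by rw [abs_sub_comm]; exact le_ciSup hbdd u)
  exact ⟨Pinv_le_Pinv F Q f g _ hle1, Pinv_le_Pinv F Q g f _ hle2⟩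
end
end

section
/- If Q = Q₁ ∪ ... ∪ Q_N with each Q_i compact and strongly invariant, then P_int(f,Q) ≤ max_{1≤i≤N} P_int(f,Q_i). -/
open Filter Topology
open scoped ENNReal

noncomputable section

/-! Spanning sets of control sequences for the `Q i` together span their union, so `a_n` is
subadditive over finite unions; and the exponential growth rate (`expGrowthSup`) of a finite sum
of sequences is the maximum of their growth rates. -/

open ExpGrowth

section

variable {X U : Type*} [TopologicalSpace X]

lemma IsSpanningSet.union {F : X → U → X} {A B : Set X} {n : ℕ} {S T : Set (ℕ → U)}
    (hS : IsSpanningSet F A n S) (hT : IsSpanningSet F B n T) :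
    IsSpanningSet F (A ∪ B) n (S ∪ T) := by
  rintro x (hx | hx)
  · obtain ⟨ω, hω, hint⟩ := hS x hx
    exact ⟨ω, .inl hω, fun i h₁ h₂ => interior_mono Set.subset_union_left (hint i h₁ h₂)⟩
  · obtain ⟨ω, hω, hint⟩ := hT x hx
    exact ⟨ω, .inr hω, fun i h₁ h₂ => interior_mono Set.subset_union_right (hint i h₁ h₂)⟩

lemma aInv_empty (F : X → U → X) (f : U → ℝ) (n : ℕ) : aInv F f ∅ n = 0 :=
  le_antisymm (iInf₂_le_of_le ∅ (fun _ hx => hx.elim) (by simp)) bot_le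

lemma aInv_union_le (F : X → U → X) (f : U → ℝ) (A B : Set X) (n : ℕ) :
    aInv F f (A ∪ B) n ≤ aInv F f A n + aInv F f B n := by
  classical
  refine ENNReal.le_iInf_add_iInf fun S T => ENNReal.le_iInf_add_iInf fun hS hT => ?_
  calc aInv F f (A ∪ B) n ≤ ∑ ω ∈ S ∪ T, ENNReal.ofReal (Real.exp (Snf f n ω)) :=
        iInf₂_le (S ∪ T) (by simpa using hS.union hT)
    _ ≤ _ := le_self_add.trans_eq Finset.sum_union_inter

lemma aInv_biUnion_le_sum {ι : Type*} (F : X → U → X) (f : U → ℝ) (Q : ι → Set X)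
    (s : Finset ι) (n : ℕ) : aInv F f (⋃ i ∈ s, Q i) n ≤ ∑ i ∈ s, aInv F f (Q i) n := by
  classical
  induction s using Finset.induction_on with
  | empty => simp [aInv_empty]
  | insert i s hi ih =>
    rw [Finset.set_biUnion_insert, Finset.sum_insert hi]
    exact (aInv_union_le F f _ _ n).trans (add_le_add le_rfl ih)

lemma aInv_iUnion_le_sum {ι : Type*} [Fintype ι] (F : X → U → X) (f : U → ℝ) (Q : ι → Set X)
    (n : ℕ) : aInv F f (⋃ i, Q i) n ≤ ∑ i, aInv F f (Q i) n := by
  simpa using aInv_biUnion_le_sum F f Q Finset.univ n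

lemma Pinv_eq_expGrowthSup (F : X → U → X) (f : U → ℝ) (Q : Set X) :
    Pinv F f Q = expGrowthSup (aInv F f Q) := by
  simp only [Pinv, expGrowthSup, EReal.coe_inv, mul_comm _ (ENNReal.log _), div_eq_mul_inv]
  rfl

end

theorem pressure_union_le_max_general {X U : Type*} [MetricSpace X]
    (F : X → U → X) (N : ℕ) (Q : Fin N → Set X) (f : U → ℝ) :
    Pinv F f (⋃ i, Q i) ≤ ⨆ i, Pinv F f (Q i) := by
  simp only [Pinv_eq_expGrowthSup]
  calc expGrowthSup (aInv F f (⋃ i, Q i))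
      ≤ expGrowthSup (∑ i, aInv F f (Q i)) :=
        expGrowthSup_monotone fun n => by simpa using aInv_iUnion_le_sum F f Q n
    _ = ⨆ i, expGrowthSup (aInv F f (Q i)) := by simp [expGrowthSup_sum]

/-- If `Q = Q₁ ∪ ⋯ ∪ Q_N` with each `Q_i` compact and strongly invariant, then
`P_int(f,Q) ≤ max_i P_int(f,Q_i)`. -/
theorem pressure_union_le_max {X U : Type*} [MetricSpace X] [TopologicalSpace U]
    (F : X → U → X) (hF : ∀ u, Continuous fun x => F x u)
    (N : ℕ) (hN : 0 < N) (Q : Fin N → Set X)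
    (hQc : ∀ i, IsCompact (Q i)) (hQi : ∀ i, StronglyInvariant F (Q i))
    (hQu : IsCompact (⋃ i, Q i)) (hQuinv : StronglyInvariant F (⋃ i, Q i))
    (f : U → ℝ) (hf : Continuous f) :
    Pinv F f (⋃ i, Q i) ≤ ⨆ i, Pinv F f (Q i) :=
  pressure_union_le_max_general F N Q f
end
end

section
/- Inner invariance pressure is invariant under skew conjugacy: if (ρ, H) is a skew conjugacy between two systems and Q ⊆ X₁ is compact strongly invariant, then ρ(Q) is compact strongly invariant for the second system and P_int(f ∘ H, Q) = P_int(f, ρ(Q)) for every f ∈ C(U₂,ℝ). -/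
open Filter Topology
open scoped ENNReal

noncomputable section

lemma phi_conj {X₁ X₂ U₁ U₂ : Type*}
    (F₁ : X₁ → U₁ → X₁) (F₂ : X₂ → U₂ → X₂) (ρ : X₁ → X₂) (H : U₁ → U₂)
    (hconj : ∀ x u, ρ (F₁ x u) = F₂ (ρ x) (H u)) :
    ∀ (i : ℕ) (x : X₁) (ω : ℕ → U₁),
      phi F₂ i (ρ x) (fun k => H (ω k)) = ρ (phi F₁ i x ω) := by
  intro i
  induction i with
  | zero => intro x ω; rfl
  | succ k ih =>
    intro x ω
    simp only [phi, ih, hconj]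

lemma aInv_conj_le {X₁ X₂ U₁ U₂ : Type*} [TopologicalSpace X₁] [TopologicalSpace X₂]
    (F₁ : X₁ → U₁ → X₁) (F₂ : X₂ → U₂ → X₂) (ρ : X₁ ≃ₜ X₂) (H : U₁ ≃ U₂)
    (hconj : ∀ x u, ρ (F₁ x u) = F₂ (ρ x) (H u))
    (Q : Set X₁) (f : U₂ → ℝ) (n : ℕ) :
    aInv F₂ f (ρ '' Q) n ≤ aInv F₁ (fun u => f (H u)) Q n := by
  classical
  refine le_iInf fun S => le_iInf fun hS => ?_
  have hinj : Function.Injective (fun ω : ℕ → U₁ => fun k => H (ω k)) := by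
    intro ω ω' h
    funext k
    exact H.injective (congrFun h k)
  refine iInf_le_of_le (S.image (fun ω => fun k => H (ω k))) (le_trans (iInf_le _ ?_) ?_)
  · intro y hy
    obtain ⟨x, hx, rfl⟩ := hy
    obtain ⟨ω, hω, hspan⟩ := hS x hx
    refine ⟨fun k => H (ω k), Finset.mem_coe.2 (Finset.mem_image_of_mem _ hω), fun i h1 h2 => ?_⟩
    rw [phi_conj F₁ F₂ ρ H hconj, ← ρ.image_interior]
    exact Set.mem_image_of_mem _ (hspan i h1 h2)
  · rw [Finset.sum_image (fun a _ b _ h => hinj h)]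
    exact le_of_eq (Finset.sum_congr rfl fun ω _ => rfl)

lemma aInv_conj_eq {X₁ X₂ U₁ U₂ : Type*} [TopologicalSpace X₁] [TopologicalSpace X₂]
    (F₁ : X₁ → U₁ → X₁) (F₂ : X₂ → U₂ → X₂) (ρ : X₁ ≃ₜ X₂) (H : U₁ ≃ U₂)
    (hconj : ∀ x u, ρ (F₁ x u) = F₂ (ρ x) (H u))
    (Q : Set X₁) (f : U₂ → ℝ) (n : ℕ) :
    aInv F₁ (fun u => f (H u)) Q n = aInv F₂ f (ρ '' Q) n := by
  refine le_antisymm ?_ (aInv_conj_le F₁ F₂ ρ H hconj Q f n)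
  have hconj' : ∀ y v, ρ.symm (F₂ y v) = F₁ (ρ.symm y) (H.symm v) := by
    intro y v
    have := hconj (ρ.symm y) (H.symm v)
    simp only [Homeomorph.apply_symm_apply, Equiv.apply_symm_apply] at this
    exact ρ.injective (by simp [this])
  have := aInv_conj_le F₂ F₁ ρ.symm H.symm hconj' (ρ '' Q) (fun u => f (H u)) n
  have hQ : ρ.symm '' (ρ '' Q) = Q := by
    rw [← Set.image_comp]; simp
  have hfH : (fun v : U₂ => f (H (H.symm v))) = f := by
    funext v; simp
  rw [hQ] at this
  simpa [hfH] using this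


/-- Invariance of the inner invariance pressure under skew conjugacy: if
`ρ(F₁(x,u)) = F₂(ρ(x), H(u))` for homeomorphisms `ρ, H`, and `Q` is compact and strongly
invariant, then `ρ(Q)` is compact and strongly invariant and
`P_int(f ∘ H, Q) = P_int(f, ρ(Q))`. -/
theorem pressure_skew_conjugacy {X₁ X₂ U₁ U₂ : Type*} [MetricSpace X₁] [MetricSpace X₂]
    [TopologicalSpace U₁] [TopologicalSpace U₂]
    (F₁ : X₁ → U₁ → X₁) (F₂ : X₂ → U₂ → X₂)
    (ρ : X₁ ≃ₜ X₂) (H : U₁ ≃ₜ U₂)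
    (hconj : ∀ x u, ρ (F₁ x u) = F₂ (ρ x) (H u))
    (Q : Set X₁) (hQ : IsCompact Q) (hinv : StronglyInvariant F₁ Q)
    (f : U₂ → ℝ) (hf : Continuous f) :
    IsCompact (ρ '' Q) ∧ StronglyInvariant F₂ (ρ '' Q) ∧
      Pinv F₁ (fun u => f (H u)) Q = Pinv F₂ f (ρ '' Q) := by
  have hconj' : ∀ y v, ρ.symm (F₂ y v) = F₁ (ρ.symm y) (H.symm v) := by
    intro y v
    have := hconj (ρ.symm y) (H.symm v)
    simp only [Homeomorph.apply_symm_apply] at this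
    exact ρ.injective (by simp [this])
  refine ⟨hQ.image ρ.continuous, ?_, ?_⟩
  · rintro y ⟨x, hx, rfl⟩
    obtain ⟨u, hu⟩ := hinv x hx
    exact ⟨H u, by rw [← hconj, ← ρ.image_interior]; exact Set.mem_image_of_mem _ hu⟩
  · unfold Pinv
    congr 1
    funext n
    have h := aInv_conj_eq F₁ F₂ ρ H.toEquiv hconj Q f n
    simp only [Homeomorph.coe_toEquiv] at h
    rw [h]
end
end

section
/- For a continuous-time control system with compact control range U, the invariance pressure can be computed along multiples of any fixed τ > 0: P_inv(f,Q) = limsup_{n→∞} (1/(nτ)) log a_{nτ}(f,Q) for every f ∈ C(U,ℝ). -/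
/-!
A `(T',Q)`-spanning set is `(T,Q)`-spanning for `T ≤ T'`, and each of its weights satisfies
`exp ∫₀^T f(ω) ≤ e^{M (T' - T)} exp ∫₀^{T'} f(ω)`, where `M` bounds `|f|` on the compact `U`.
Hence `log a_T ≤ log a_{T'} + M (T' - T)`, and comparing `T` with the next multiple `nτ ≥ T`
costs only `Mτ / T → 0` in `(1/T) log a_T`; the reverse inequality is the passage to a
subsequence. Working with `ENNReal.log` in `EReal` covers `a_T = 0` and `a_T = ∞` uniformly.
-/

open Filter Topology
open scoped ENNReal

noncomputable section

/-- Admissible controls: measurable functions `ℝ → ℝ^m` with values in the control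
range `U`. -/
def Ctrl (m : ℕ) (U : Set (Fin m → ℝ)) : Type :=
  {ω : ℝ → (Fin m → ℝ) // Measurable ω ∧ ∀ t, ω t ∈ U}

/-- `a_T(f,Q)` for a continuous-time system with solution map `φ`: the infimum over
`(T,Q)`-spanning (finite) sets `S` of controls of `∑_{ω ∈ S} exp (∫_0^T f(ω(t)) dt)`,
where `S` is `(T,Q)`-spanning if for every `x ∈ Q` some `ω ∈ S` keeps
`φ(t,x,ω) ∈ Q` for all `t ∈ [0,T]`. -/
def aCT {X : Type*} (m : ℕ) (U : Set (Fin m → ℝ)) (φ : ℝ → X → Ctrl m U → X)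
    (Q : Set X) (f : (Fin m → ℝ) → ℝ) (T : ℝ) : ℝ≥0∞ :=
  ⨅ (S : Finset (Ctrl m U))
    (_ : ∀ x ∈ Q, ∃ ω ∈ S, ∀ t ∈ Set.Icc (0 : ℝ) T, φ t x ω ∈ Q),
    ∑ ω ∈ S, ENNReal.ofReal (Real.exp (∫ t in (0 : ℝ)..T, f (ω.1 t)))

section

variable {m : ℕ} {U : Set (Fin m → ℝ)} {f : (Fin m → ℝ) → ℝ} {M : ℝ}

lemma Ctrl.intervalIntegrable_comp (hf : Measurable f) (hM : ∀ u ∈ U, ‖f u‖ ≤ M)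
    (ω : Ctrl m U) (a b : ℝ) :
    IntervalIntegrable (fun t => f (ω.1 t)) MeasureTheory.volume a b :=
  intervalIntegrable_const.mono_fun' (hf.comp ω.2.1).aestronglyMeasurable
    (.of_forall fun t => hM _ (ω.2.2 t))

lemma Ctrl.integral_comp_le_integral_add (hf : Measurable f) (hM : ∀ u ∈ U, ‖f u‖ ≤ M)
    (ω : Ctrl m U) {T T' : ℝ} (hTT' : T ≤ T') :
    ∫ t in (0 : ℝ)..T, f (ω.1 t) ≤ (∫ t in (0 : ℝ)..T', f (ω.1 t)) + M * (T' - T) := by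
  have hsplit := intervalIntegral.integral_add_adjacent_intervals
    (ω.intervalIntegrable_comp hf hM 0 T) (ω.intervalIntegrable_comp hf hM T T')
  have hlower : ∫ _ in T..T', -M ≤ ∫ t in T..T', f (ω.1 t) :=
    intervalIntegral.integral_mono_on hTT' intervalIntegrable_const
      (ω.intervalIntegrable_comp hf hM T T')
      fun t _ => neg_le_of_abs_le (Real.norm_eq_abs _ ▸ hM _ (ω.2.2 t))
  simp only [intervalIntegral.integral_const, smul_eq_mul] at hlower
  linarith

variable {X : Type*} {φ : ℝ → X → Ctrl m U → X} {Q : Set X}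

lemma aCT_le_exp_mul_aCT (hf : Measurable f) (hM : ∀ u ∈ U, ‖f u‖ ≤ M)
    {T T' : ℝ} (hTT' : T ≤ T') :
    aCT m U φ Q f T ≤ ENNReal.ofReal (Real.exp (M * (T' - T))) * aCT m U φ Q f T' := by
  have hexp_ne_zero : ENNReal.ofReal (Real.exp (M * (T' - T))) ≠ 0 :=
    (ENNReal.ofReal_pos.2 (Real.exp_pos _)).ne'
  simp_rw [aCT, ENNReal.mul_iInf_of_ne hexp_ne_zero ENNReal.ofReal_ne_top, Finset.mul_sum]
  refine le_iInf₂ fun S hS => iInf₂_le_of_le S (fun x hx => ?_) (Finset.sum_le_sum fun ω _ => ?_)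
  · obtain ⟨ω, hωS, hω⟩ := hS x hx
    exact ⟨ω, hωS, fun t ht => hω t ⟨ht.1, ht.2.trans hTT'⟩⟩
  · rw [← ENNReal.ofReal_mul (Real.exp_nonneg _), ← Real.exp_add]
    gcongr
    linarith [ω.integral_comp_le_integral_add hf hM hTT']

lemma log_aCT_le_log_aCT_add (hf : Measurable f) (hM : ∀ u ∈ U, ‖f u‖ ≤ M)
    {T T' : ℝ} (hTT' : T ≤ T') :
    ENNReal.log (aCT m U φ Q f T) ≤ ENNReal.log (aCT m U φ Q f T') + (M * (T' - T) : ℝ) := by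
  calc ENNReal.log (aCT m U φ Q f T)
      ≤ ENNReal.log (ENNReal.ofReal (Real.exp (M * (T' - T))) * aCT m U φ Q f T') :=
        ENNReal.log_le_log (aCT_le_exp_mul_aCT hf hM hTT')
    _ = _ := by
        rw [ENNReal.log_mul_add, ENNReal.log_ofReal_of_pos (Real.exp_pos _), Real.log_exp,
          add_comm]

end

lemma EReal.coe_inv_mul_le_coe_iff {t : ℝ} (ht : 0 < t) {x : EReal} {r : ℝ} :
    ((t⁻¹ : ℝ) : EReal) * x ≤ r ↔ x ≤ (t * r : ℝ) := by
  induction x using EReal.rec with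
  | bot => simp [EReal.coe_mul_bot_of_pos (inv_pos.2 ht)]
  | top => simp only [EReal.coe_mul_top_of_pos (inv_pos.2 ht), top_le_iff, EReal.coe_ne_top]
  | coe x => norm_cast; rw [inv_mul_le_iff₀ ht]

theorem limsup_inv_mul_le_limsup_nat_mul {h : ℝ → EReal} {τ C : ℝ} (hτ : 0 < τ)
    (hh : ∀ T T', T ≤ T' → T' ≤ T + τ → h T ≤ h T' + C) :
    atTop.limsup (fun T : ℝ => ((T⁻¹ : ℝ) : EReal) * h T)
      ≤ atTop.limsup (fun n : ℕ => (((n * τ : ℝ)⁻¹ : ℝ) : EReal) * h (n * τ)) := by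
  refine EReal.le_of_forall_lt_iff_le.1 fun z hz => ?_
  obtain ⟨c, hc, hcz'⟩ := EReal.exists_between_coe_real hz
  have hcz : c < z := by exact_mod_cast hcz'
  obtain ⟨N, hN⟩ := eventually_atTop.1 (eventually_lt_of_limsup_lt hc)
  refine limsup_le_of_le (by isBoundedDefault) ?_
  filter_upwards [eventually_gt_atTop 0, eventually_ge_atTop (N * τ),
    eventually_ge_atTop ((|c| * τ + C) / (z - c))] with T hT hNT hT_large
  set n := ⌈T / τ⌉₊
  have hTn : T ≤ n * τ := (div_le_iff₀ hτ).1 (Nat.le_ceil _)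
  have hnT : n * τ ≤ T + τ := by
    have hn := Nat.ceil_lt_add_one (div_nonneg hT.le hτ.le)
    have hcancel : T / τ * τ = T := div_mul_cancel₀ _ hτ.ne'
    nlinarith
  have hNn : N ≤ n := by
    exact_mod_cast ((le_div_iff₀ hτ).2 hNT).trans (Nat.le_ceil _)
  have hn : h (n * τ) ≤ (n * τ * c : ℝ) :=
    (EReal.coe_inv_mul_le_coe_iff (hT.trans_le hTn)).1 (hN n hNn).le
  have hround : n * τ * c ≤ T * c + |c| * τ := by
    nlinarith [abs_nonneg c, le_abs_self c, neg_abs_le c]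
  have hreal : n * τ * c + C ≤ T * z := by
    have := (div_le_iff₀ (sub_pos.2 hcz)).1 hT_large
    linarith
  refine (EReal.coe_inv_mul_le_coe_iff hT).2 ?_
  calc h T ≤ h (n * τ) + C := hh _ _ hTn hnT
    _ ≤ (n * τ * c : ℝ) + C := by gcongr
    _ ≤ (T * z : ℝ) := by exact_mod_cast hreal

theorem invariance_pressure_discretization_general {X : Type*}
    (m : ℕ) (U : Set (Fin m → ℝ)) (hU : IsCompact U)
    (φ : ℝ → X → Ctrl m U → X) (Q : Set X)
    (f : (Fin m → ℝ) → ℝ) (hf : Continuous f) (τ : ℝ) (hτ : 0 < τ) :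
    Filter.atTop.limsup (fun T : ℝ => ((T⁻¹ : ℝ) : EReal) * ENNReal.log (aCT m U φ Q f T))
      = Filter.atTop.limsup (fun n : ℕ =>
          (((n * τ : ℝ)⁻¹ : ℝ) : EReal) * ENNReal.log (aCT m U φ Q f (n * τ))) := by
  obtain ⟨M, hM⟩ := hU.exists_bound_of_continuousOn hf.continuousOn
  have hM' : ∀ u ∈ U, ‖f u‖ ≤ max M 0 := fun u hu => (hM u hu).trans (le_max_left _ _)
  have hlog_step : ∀ T T', T ≤ T' → T' ≤ T + τ → ENNReal.log (aCT m U φ Q f T) ≤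
      ENNReal.log (aCT m U φ Q f T') + (max M 0 * τ : ℝ) := fun T T' hTT' hT' =>
    (log_aCT_le_log_aCT_add hf.measurable hM' hTT').trans (by gcongr; linarith)
  exact le_antisymm (limsup_inv_mul_le_limsup_nat_mul hτ hlog_step)
    ((tendsto_natCast_atTop_atTop.atTop_mul_const hτ).limsup_comp_le_limsup
      (u := fun T : ℝ => ((T⁻¹ : ℝ) : EReal) * ENNReal.log (aCT m U φ Q f T)))

/-- For a continuous-time control system with compact control range, the invariance
pressure `P_inv(f,Q) = limsup_{T→∞} (1/T) log a_T(f,Q)` can be computed along the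
multiples of any fixed `τ > 0`. -/
theorem invariance_pressure_discretization {X : Type*} [MetricSpace X]
    (m : ℕ) (U : Set (Fin m → ℝ)) (hU : IsCompact U) (hUne : U.Nonempty)
    (φ : ℝ → X → Ctrl m U → X) (Q : Set X) (hQ : IsCompact Q)
    (hinv : ∀ x ∈ Q, ∃ ω : Ctrl m U, ∀ t, 0 ≤ t → φ t x ω ∈ Q)
    (f : (Fin m → ℝ) → ℝ) (hf : Continuous f) (τ : ℝ) (hτ : 0 < τ) :
    Filter.atTop.limsup (fun T : ℝ => ((T⁻¹ : ℝ) : EReal) * ENNReal.log (aCT m U φ Q f T))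
      = Filter.atTop.limsup (fun n : ℕ =>
          (((n * τ : ℝ)⁻¹ : ℝ) : EReal) * ENNReal.log (aCT m U φ Q f (n * τ))) :=
  invariance_pressure_discretization_general m U hU φ Q f hf τ hτ
end
end
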